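/- arXiv:2209.08567 — 6 statements merged into one kernel-verified Lean document; each statement's English description precedes it below -/
import Mathlib

section
/- For all real numbers a and b, ∫_{-∞}^{∞} x² Φ(ax+b) φ(x) dx = Φ(b/√(1+a²)) − (a²b/(1+a²)^{3/2}) φ(b/√(1+a²)). -/
open MeasureTheory Real

/-- The standard normal probability density function φ. -/
noncomputable def normPdf (x : ℝ) : ℝ := (Real.sqrt (2 * Real.pi))⁻¹ * Real.exp (-x ^ 2 / 2)

/-- The standard normal cumulative distribution function Φ. -/
noncomputable def normCdf (x : ℝ) : ℝ := ∫ t in Set.Iic x, normPdf t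

/-!
Put `s = √(1 + a²)`. A linear substitution gives `Φ(ax + b) = s ∫_{u ≤ b/s} φ(su + ax) du`, and
since `s² = 1 + a²` the quadratic form `(su + ax)² + x²` equals `u² + (sx + au)²`, so
`φ(su + ax) φ(x) = φ(u) φ(sx + au)`. After Fubini the inner integral over `x` is a second moment
of a Gaussian, `∫ x² φ(sx + au) dx = (1 + a²u²) / s³`, which leaves
`s⁻² ∫_{u ≤ b/s} (1 + a²u²) φ(u) du`; integrating `u² φ(u) = -u φ'(u)` by parts evaluates it.
-/

open Set Filter Topology ProbabilityTheory

section ChangeOfVariables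

variable {E : Type*} [NormedAddCommGroup E] [NormedSpace ℝ E]

theorem integral_comp_mul_add (g : ℝ → E) (s d : ℝ) :
    ∫ x, g (s * x + d) = |s⁻¹| • ∫ y, g y := by
  rw [Measure.integral_comp_mul_left (fun y => g (y + d)), integral_add_right_eq_self]

theorem setIntegral_Iic_comp_mul_add (g : ℝ → E) {s : ℝ} (hs : 0 < s) (c d : ℝ) :
    ∫ x in Iic c, g (s * x + d) = s⁻¹ • ∫ y in Iic (s * c + d), g y := by
  have hpre : (fun x => s * x + d) ⁻¹' Iic (s * c + d) = Iic c := by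
    ext x; simp [hs]
  rw [← integral_indicator measurableSet_Iic, ← integral_indicator measurableSet_Iic, ← hpre,
    show (fun x => g (s * x + d)) = g ∘ fun x => s * x + d from rfl]
  simp_rw [indicator_comp_right]
  rw [integral_comp_mul_add, abs_of_pos (inv_pos.2 hs)]

end ChangeOfVariables

theorem rpow_three_halves {x : ℝ} (hx : 0 ≤ x) : x ^ ((3 : ℝ) / 2) = √x ^ 3 := by
  rw [show (3 : ℝ) / 2 = 1 / 2 * 3 by norm_num, rpow_mul hx, ← sqrt_eq_rpow, rpow_ofNat]

theorem integral_sq_gaussianReal (μ : ℝ) (v : NNReal) :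
    ∫ x, x ^ 2 ∂gaussianReal μ v = v + μ ^ 2 := by
  have h := variance_eq_sub (memLp_id_gaussianReal (μ := μ) (v := v) 2)
  simp only [variance_id_gaussianReal, id_eq, Pi.pow_apply, integral_id_gaussianReal] at h
  linarith

theorem normPdf_nonneg (x : ℝ) : 0 ≤ normPdf x := by
  unfold normPdf; positivity

theorem normPdf_eq_gaussianPDFReal : normPdf = gaussianPDFReal 0 1 := by
  ext x; simp [normPdf, gaussianPDFReal]

theorem integrable_normPdf : Integrable normPdf :=
  normPdf_eq_gaussianPDFReal ▸ integrable_gaussianPDFReal 0 1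

theorem integral_normPdf : ∫ x, normPdf x = 1 := by
  simpa [normPdf_eq_gaussianPDFReal] using integral_gaussianPDFReal_eq_one 0 one_ne_zero

theorem integral_mul_normPdf_eq_integral_gaussianReal (f : ℝ → ℝ) :
    ∫ x, f x * normPdf x = ∫ x, f x ∂gaussianReal 0 1 := by
  simp [integral_gaussianReal_eq_integral_smul, normPdf_eq_gaussianPDFReal, mul_comm]

theorem integrable_pow_mul_normPdf (n : ℕ) : Integrable fun x : ℝ => x ^ n * normPdf x := by
  have h := integrable_rpow_mul_exp_neg_mul_sq one_half_pos (s := n)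
    (by linarith [n.cast_nonneg (α := ℝ)])
  refine (h.const_mul (√(2 * π))⁻¹).congr (.of_forall fun x => ?_)
  simp only [normPdf, rpow_natCast]
  ring_nf

theorem hasDerivAt_normPdf (x : ℝ) : HasDerivAt normPdf (-x * normPdf x) x := by
  have h : HasDerivAt (fun y : ℝ => -y ^ 2 / 2) (-x) x := by
    simpa using ((hasDerivAt_pow 2 x).neg.div_const 2).congr_deriv (by ring : _ = -x)
  exact (h.exp.const_mul _).congr_deriv (by simp only [normPdf]; ring)

theorem tendsto_mul_normPdf_atBot : Tendsto (fun x => x * normPdf x) atBot (𝓝 0) := by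
  have h := ((tendsto_rpow_abs_mul_exp_neg_mul_sq_cocompact one_half_pos 1).const_mul
    (√(2 * π))⁻¹).mono_left atBot_le_cocompact
  rw [mul_zero] at h
  refine squeeze_zero_norm (fun x => le_of_eq ?_) h
  rw [norm_mul, norm_of_nonneg (normPdf_nonneg x), rpow_one, Real.norm_eq_abs, normPdf,
    neg_div, neg_mul, div_eq_inv_mul, one_div, mul_left_comm]

theorem setIntegral_Iic_sq_mul_normPdf (c : ℝ) :
    ∫ u in Iic c, u ^ 2 * normPdf u = normCdf c - c * normPdf c := by
  have hderiv : ∀ x ∈ Iic c, HasDerivAt (fun u => -(u * normPdf u))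
      (x ^ 2 * normPdf x - normPdf x) x := fun x _ =>
    ((hasDerivAt_id' x).mul (hasDerivAt_normPdf x)).neg.congr_deriv (by ring)
  have h := integral_Iic_of_hasDerivAt_of_tendsto' hderiv
    ((integrable_pow_mul_normPdf 2).sub integrable_normPdf).integrableOn
    (by simpa using tendsto_mul_normPdf_atBot.neg)
  rw [integral_sub (integrable_pow_mul_normPdf 2).integrableOn integrable_normPdf.integrableOn]
    at h
  rw [normCdf]
  linarith

theorem setIntegral_Iic_one_add_sq_mul_normPdf (α c : ℝ) :
    ∫ u in Iic c, (1 + (α * u) ^ 2) * normPdf u =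
      normCdf c + α ^ 2 * (normCdf c - c * normPdf c) := by
  have hexp : (fun u => (1 + (α * u) ^ 2) * normPdf u) =
      fun u => normPdf u + α ^ 2 * (u ^ 2 * normPdf u) := by
    ext; ring
  rw [hexp, integral_add integrable_normPdf.integrableOn
    ((integrable_pow_mul_normPdf 2).integrableOn.const_mul _), integral_const_mul,
    setIntegral_Iic_sq_mul_normPdf, normCdf]

theorem integral_add_sq_mul_normPdf (α β : ℝ) :
    ∫ x, (α * x + β) ^ 2 * normPdf x = α ^ 2 + β ^ 2 := by
  have hL2 := memLp_id_gaussianReal (μ := 0) (v := 1) 2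
  have hx : Integrable (fun x : ℝ => x) (gaussianReal 0 1) := hL2.integrable one_le_two
  have hx2 : Integrable (fun x : ℝ => x ^ 2) (gaussianReal 0 1) := hL2.integrable_sq
  have hlin : Integrable (fun x : ℝ => α ^ 2 * x ^ 2 + 2 * α * β * x) (gaussianReal 0 1) :=
    (hx2.const_mul _).add (hx.const_mul _)
  have hexp : (fun x : ℝ => (α * x + β) ^ 2) =
      fun x => α ^ 2 * x ^ 2 + 2 * α * β * x + β ^ 2 := by
    ext; ring
  rw [integral_mul_normPdf_eq_integral_gaussianReal, hexp, integral_add hlin (integrable_const _),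
    integral_add (hx2.const_mul _) (hx.const_mul _), integral_const_mul, integral_const_mul,
    integral_sq_gaussianReal, integral_id_gaussianReal]
  simp

theorem integral_sq_mul_normPdf_mul_add {s : ℝ} (hs : 0 < s) (d : ℝ) :
    ∫ x, x ^ 2 * normPdf (s * x + d) = (1 + d ^ 2) / s ^ 3 := by
  calc ∫ x, x ^ 2 * normPdf (s * x + d)
      = ∫ x, (s⁻¹ * (s * x + d) + -(s⁻¹ * d)) ^ 2 * normPdf (s * x + d) := by
        congr 1; ext x; field_simp; ring
    _ = s⁻¹ * ((s⁻¹) ^ 2 + (-(s⁻¹ * d)) ^ 2) := by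
        rw [integral_comp_mul_add (fun y => (s⁻¹ * y + -(s⁻¹ * d)) ^ 2 * normPdf y),
          integral_add_sq_mul_normPdf, abs_of_pos (inv_pos.2 hs), smul_eq_mul]
    _ = (1 + d ^ 2) / s ^ 3 := by field_simp

theorem normCdf_mul_add {s : ℝ} (hs : 0 < s) (c d : ℝ) :
    normCdf (s * c + d) = s * ∫ u in Iic c, normPdf (s * u + d) := by
  rw [setIntegral_Iic_comp_mul_add _ hs, smul_eq_mul, mul_inv_cancel_left₀ hs.ne', normCdf]

theorem normPdf_mul_normPdf_of_sq_eq {a s : ℝ} (h : s ^ 2 = 1 + a ^ 2) (u x : ℝ) :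
    normPdf (s * u + a * x) * normPdf x = normPdf u * normPdf (s * x + a * u) := by
  simp only [normPdf]
  rw [mul_mul_mul_comm, mul_mul_mul_comm _ (exp _), ← exp_add, ← exp_add]
  congr 2
  linear_combination (x ^ 2 - u ^ 2) / 2 * h

theorem MeasureTheory.Integrable.prod_mul_normPdf_mul_add {g : ℝ → ℝ} (hg : Integrable g) {s : ℝ}
    (hs : s ≠ 0) (a : ℝ) :
    Integrable (fun p : ℝ × ℝ => g p.1 * normPdf (s * p.2 + a * p.1)) (volume.prod volume) := by
  have hmeas : AEStronglyMeasurable (fun p : ℝ × ℝ => g p.1 * normPdf (s * p.2 + a * p.1))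
      (volume.prod volume) :=
    hg.1.comp_fst.mul (by unfold normPdf; fun_prop : Continuous _).aestronglyMeasurable
  refine (integrable_prod_iff hmeas).2 ⟨.of_forall fun x => ?_, ?_⟩
  · exact ((integrable_normPdf.comp_add_right (a * x)).comp_mul_left' hs).const_mul (g x)
  · simp_rw [norm_mul, norm_of_nonneg (normPdf_nonneg _), integral_const_mul,
      integral_comp_mul_add normPdf, integral_normPdf]
    exact hg.norm.mul_const _

theorem integral_sq_mul_normPdf_mul_normPdf_of_sq_eq {a s : ℝ} (hs : 0 < s)
    (h : s ^ 2 = 1 + a ^ 2) (u : ℝ) :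
    ∫ x, x ^ 2 * normPdf x * normPdf (s * u + a * x) = (1 + (a * u) ^ 2) * normPdf u / s ^ 3 := by
  have hrot : ∀ x, x ^ 2 * normPdf x * normPdf (s * u + a * x) =
      normPdf u * (x ^ 2 * normPdf (s * x + a * u)) := fun x => by
    linear_combination x ^ 2 * normPdf_mul_normPdf_of_sq_eq h u x
  simp_rw [hrot]
  rw [integral_const_mul, integral_sq_mul_normPdf_mul_add hs]
  ring

/-- For all real `a`, `b`:
`∫ x² Φ(ax+b) φ(x) dx = Φ(b/√(1+a²)) − (a²b/(1+a²)^{3/2}) φ(b/√(1+a²))`. -/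
theorem stmt_0 (a b : ℝ) :
    ∫ x : ℝ, x ^ 2 * normCdf (a * x + b) * normPdf x =
      normCdf (b / Real.sqrt (1 + a ^ 2)) -
        a ^ 2 * b / (1 + a ^ 2) ^ ((3 : ℝ) / 2) * normPdf (b / Real.sqrt (1 + a ^ 2)) := by
  have h0 : 0 < 1 + a ^ 2 := by positivity
  rw [rpow_three_halves h0.le]
  set s := √(1 + a ^ 2)
  have hs : 0 < s := sqrt_pos.2 h0
  have hs2 : s ^ 2 = 1 + a ^ 2 := sq_sqrt h0.le
  have hF : Integrable (Function.uncurry fun x u => x ^ 2 * normPdf x * normPdf (s * u + a * x))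
      (volume.prod (volume.restrict (Iic (b / s)))) :=
    ((integrable_pow_mul_normPdf 2).prod_mul_normPdf_mul_add hs.ne' a).mono_measure
      (Measure.prod_mono le_rfl Measure.restrict_le_self)
  calc ∫ x, x ^ 2 * normCdf (a * x + b) * normPdf x
      = s * ∫ x, ∫ u in Iic (b / s), x ^ 2 * normPdf x * normPdf (s * u + a * x) := by
        rw [← integral_const_mul]
        congr 1; ext x
        rw [show a * x + b = s * (b / s) + a * x by field_simp; ring, normCdf_mul_add hs,
          integral_const_mul]
        ring
    _ = s * ∫ u in Iic (b / s), (1 + (a * u) ^ 2) * normPdf u / s ^ 3 := by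
        simp_rw [integral_integral_swap hF, integral_sq_mul_normPdf_mul_normPdf_of_sq_eq hs hs2]
    _ = normCdf (b / s) - a ^ 2 * b / s ^ 3 * normPdf (b / s) := by
        rw [integral_div, setIntegral_Iic_one_add_sq_mul_normPdf]
        field_simp
        linear_combination s * normCdf (b / s) * hs2.symm
end

section
/- Let U = (n₁X̄_S + n₂Ȳ)/(n₁+n₂) − μ_S. Then for every (μ₁, μ₂) ∈ ℝ², E[U²] = σ²/(n₁+n₂). Equivalently, the estimator δ_M(X̄₁, X̄₂, Ȳ) = (n₁X̄_S + n₂Ȳ)/(n₁+n₂) has constant risk R((μ₁,μ₂), δ_M) = σ²/(n₁+n₂). -/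
/-!
With `a = n₁/(n₁+n₂)` and `b = n₂/(n₁+n₂)`, `δ_M − μ_S = a (X̄_S − μ_S) + b (Ȳ − μ_S)`. Given the
first stage, `Ȳ − μ_S` is a centred normal of variance `σ²/n₂` independent of it, so Fubini over
the second stage gives `E[(δ_M − μ_S)²] = a² E[(X̄_S − μ_S)²] + b² σ²/n₂`.

Selection does not bias the second moment of the first stage: the reflection
`(z₁, z₂) ↦ (−z₂, −z₁)` of the centred errors `zᵢ = X̄ᵢ − μᵢ` preserves their law and the event
`{X̄₁ ≥ X̄₂}`, and turns `z₂²` into `z₁²`, so `E[(X̄_S − μ_S)²] = E[z₁²] = σ²/n₁`. Finally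
`a² σ²/n₁ + b² σ²/n₂ = σ²/(n₁+n₂)`.
-/

open MeasureTheory ProbabilityTheory Real
open scoped NNReal

lemma integral_sq_const_add_mul_sub_integral {Ω : Type*} [MeasurableSpace Ω] {μ : Measure Ω}
    [IsProbabilityMeasure μ] {X : Ω → ℝ} (hX : MemLp X 2 μ) (c b : ℝ) :
    ∫ ω, (c + b * (X ω - μ[X])) ^ 2 ∂μ = c ^ 2 + b ^ 2 * Var[X; μ] := by
  have hdev : MemLp (fun ω => b * (X ω - μ[X])) 2 μ := (hX.sub (memLp_const _)).const_mul b
  have hmean : μ[fun ω => c + b * (X ω - μ[X])] = c := by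
    rw [integral_add (integrable_const c) (hdev.integrable one_le_two), integral_const_mul,
      integral_sub (hX.integrable one_le_two) (integrable_const _)]
    simp
  have hvar : Var[fun ω => c + b * (X ω - μ[X]); μ] = b ^ 2 * Var[X; μ] := by
    rw [variance_const_add hdev.aestronglyMeasurable, variance_const_mul,
      variance_sub_const hX.aestronglyMeasurable]
  have := variance_eq_sub (X := fun ω => c + b * (X ω - μ[X])) ((memLp_const c).add hdev)
  rw [hmean, hvar] at this
  simp only [Pi.pow_apply] at this
  linarith

lemma integral_sq_const_add_mul_sub_gaussianReal (m c b : ℝ) (v : ℝ≥0) :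
    ∫ y, (c + b * (y - m)) ^ 2 ∂gaussianReal m v = c ^ 2 + b ^ 2 * v := by
  simpa [integral_id_gaussianReal, variance_id_gaussianReal] using
    integral_sq_const_add_mul_sub_integral (memLp_id_gaussianReal (μ := m) (v := v) 2) c b

lemma integrable_sq_const_add_mul_sub_gaussianReal (m c b : ℝ) (v : ℝ≥0) :
    Integrable (fun y => (c + b * (y - m)) ^ 2) (gaussianReal m v) :=
  ((memLp_const c).add (((memLp_id_gaussianReal 2).sub (memLp_const m)).const_mul b)).integrable_sq

lemma integral_comp_ite_of_map_neg_eq {ν : Measure ℝ} [IsProbabilityMeasure ν]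
    (hν : ν.map (fun x => -x) = ν) {f : ℝ → ℝ} (hf : Integrable f ν)
    (hf_even : ∀ x, f (-x) = f x) (c : ℝ) :
    ∫ q, f (if q.2 ≤ q.1 + c then q.1 else q.2) ∂(ν.prod ν) = ∫ x, f x ∂ν := by
  set h : ℝ × ℝ → ℝ := fun q => f (if q.2 ≤ q.1 + c then q.1 else q.2)
  set R : ℝ × ℝ → ℝ × ℝ := fun q => (-q.2, -q.1)
  have hR : Measurable R := measurable_snd.neg.prodMk measurable_fst.neg
  have hR_map : (ν.prod ν).map R = ν.prod ν := by
    have : R = Prod.map (fun x => -x) (fun x => -x) ∘ Prod.swap := rfl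
    rw [this, ← Measure.map_map (measurable_neg.prodMap measurable_neg) measurable_swap,
      Measure.prod_swap, ← Measure.map_prod_map _ _ measurable_neg measurable_neg, hν]
  have hh : Integrable h (ν.prod ν) := by
    have hs : MeasurableSet {q : ℝ × ℝ | q.2 ≤ q.1 + c} :=
      measurableSet_le measurable_snd (measurable_fst.add_const c)
    have := Integrable.piecewise hs (hf.comp_fst ν).integrableOn (hf.comp_snd ν).integrableOn
    refine this.congr (ae_of_all _ fun q => ?_)
    by_cases hq : q.2 ≤ q.1 + c <;> simp [h, Set.piecewise, hq]
  have h_add : ∀ q, h q + h (R q) = f q.1 + f q.2 := by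
    intro q
    have h_event : -q.1 ≤ -q.2 + c ↔ q.2 ≤ q.1 + c := by constructor <;> intro <;> linarith
    simp only [h, R, h_event]
    split_ifs <;> simp only [hf_even, add_comm]
  have hhR : Integrable (fun q => h (R q)) (ν.prod ν) := by
    rw [← hR_map] at hh
    exact hh.comp_measurable hR
  have h_comp : ∫ q, h (R q) ∂(ν.prod ν) = ∫ q, h q ∂(ν.prod ν) := by
    rw [← integral_map hR.aemeasurable (by rw [hR_map]; exact hh.aestronglyMeasurable), hR_map]
  calc ∫ q, h q ∂(ν.prod ν)
      = (∫ q, h q + h (R q) ∂(ν.prod ν)) / 2 := by rw [integral_add hh hhR, h_comp]; ring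
    _ = (∫ q, f q.1 + f q.2 ∂(ν.prod ν)) / 2 := by simp_rw [h_add]
    _ = ∫ x, f x ∂ν := by
      rw [integral_add (hf.comp_fst ν) (hf.comp_snd ν), integral_fun_fst, integral_fun_snd]
      simp

/-- With `x = (X̄₁, X̄₂)`, `selectByMax x x = X̄_S`, `selectByMax x (Ȳ₁, Ȳ₂) = Ȳ` and
`selectByMax x (μ₁, μ₂) = μ_S`. -/
noncomputable def selectByMax (x u : ℝ × ℝ) : ℝ := if x.2 ≤ x.1 then u.1 else u.2

lemma selectByMax_self (x : ℝ × ℝ) : selectByMax x x = max x.1 x.2 := by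
  unfold selectByMax
  split_ifs with h
  · exact (max_eq_left h).symm
  · exact (max_eq_right (not_le.1 h).le).symm

@[fun_prop]
lemma Measurable.selectByMax {α : Type*} [MeasurableSpace α] {f g : α → ℝ × ℝ}
    (hf : Measurable f) (hg : Measurable g) : Measurable (fun a => selectByMax (f a) (g a)) :=
  Measurable.ite (measurableSet_le hf.snd hf.fst) hg.fst hg.snd

section Gaussian

variable (m : ℝ × ℝ) (v : ℝ≥0)

lemma integrable_sq_const_add_mul_selectByMax_sub_gaussianReal (x : ℝ × ℝ) (c b : ℝ) :
    Integrable (fun y => (c + b * (selectByMax x y - selectByMax x m)) ^ 2)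
      ((gaussianReal m.1 v).prod (gaussianReal m.2 v)) := by
  unfold selectByMax
  split_ifs
  · exact (integrable_sq_const_add_mul_sub_gaussianReal m.1 c b v).comp_fst _
  · exact (integrable_sq_const_add_mul_sub_gaussianReal m.2 c b v).comp_snd _

lemma integral_sq_const_add_mul_selectByMax_sub_gaussianReal (x : ℝ × ℝ) (c b : ℝ) :
    ∫ y, (c + b * (selectByMax x y - selectByMax x m)) ^ 2
      ∂((gaussianReal m.1 v).prod (gaussianReal m.2 v)) = c ^ 2 + b ^ 2 * v := by
  unfold selectByMax
  split_ifs
  · simp [integral_fun_fst (f := fun y => (c + b * (y - m.1)) ^ 2),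
      integral_sq_const_add_mul_sub_gaussianReal]
  · simp [integral_fun_snd (f := fun y => (c + b * (y - m.2)) ^ 2),
      integral_sq_const_add_mul_sub_gaussianReal]

lemma integrable_sq_selectByMax_sub_gaussianReal :
    Integrable (fun x => (selectByMax x x - selectByMax x m) ^ 2)
      ((gaussianReal m.1 v).prod (gaussianReal m.2 v)) := by
  have h₁ := (integrable_sq_const_add_mul_sub_gaussianReal m.1 0 1 v).comp_fst (gaussianReal m.2 v)
  have h₂ := (integrable_sq_const_add_mul_sub_gaussianReal m.2 0 1 v).comp_snd (gaussianReal m.1 v)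
  refine (h₁.add h₂).mono' (by fun_prop) (ae_of_all _ fun x => ?_)
  unfold selectByMax
  split_ifs
  · simp only [norm_pow, norm_eq_abs, sq_abs, one_mul, zero_add, Pi.add_apply,
      le_add_iff_nonneg_right]
    positivity
  · simp only [norm_pow, norm_eq_abs, sq_abs, one_mul, zero_add, Pi.add_apply,
      le_add_iff_nonneg_left]
    positivity

lemma integral_sq_selectByMax_sub_gaussianReal :
    ∫ x, (selectByMax x x - selectByMax x m) ^ 2
      ∂((gaussianReal m.1 v).prod (gaussianReal m.2 v)) = v := by
  have h_shift (μ : ℝ) : gaussianReal μ v = (gaussianReal 0 v).map (· + μ) := by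
    rw [gaussianReal_map_add_const, zero_add]
  rw [h_shift m.1, h_shift m.2, Measure.map_prod_map _ _ (measurable_add_const _)
    (measurable_add_const _), integral_map (by fun_prop) (by fun_prop)]
  have h_centered : ∀ z : ℝ × ℝ,
      (selectByMax (Prod.map (· + m.1) (· + m.2) z) (Prod.map (· + m.1) (· + m.2) z)
        - selectByMax (Prod.map (· + m.1) (· + m.2) z) m) ^ 2
        = (if z.2 ≤ z.1 + (m.1 - m.2) then z.1 else z.2) ^ 2 := by
    intro z
    have h_event : z.2 + m.2 ≤ z.1 + m.1 ↔ z.2 ≤ z.1 + (m.1 - m.2) := by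
      constructor <;> intro <;> linarith
    simp only [selectByMax, Prod.map_fst, Prod.map_snd, h_event]
    split_ifs <;> ring
  simp_rw [h_centered]
  rw [integral_comp_ite_of_map_neg_eq (f := fun x => x ^ 2) (by simp [gaussianReal_map_neg])
    (memLp_id_gaussianReal 2).integrable_sq (fun x => neg_sq x)]
  simpa using integral_sq_const_add_mul_sub_gaussianReal 0 0 1 v

end Gaussian

section TwoStage

variable (m : ℝ × ℝ) (a b : ℝ) (v w : ℝ≥0)

lemma integrable_sq_weighted_selectByMax_sub_gaussianReal :
    Integrable (fun p : (ℝ × ℝ) × (ℝ × ℝ) =>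
      (a * (selectByMax p.1 p.1 - selectByMax p.1 m)
        + b * (selectByMax p.1 p.2 - selectByMax p.1 m)) ^ 2)
      (((gaussianReal m.1 v).prod (gaussianReal m.2 v)).prod
        ((gaussianReal m.1 w).prod (gaussianReal m.2 w))) := by
  have hmeas : Measurable (fun p : (ℝ × ℝ) × (ℝ × ℝ) =>
      (a * (selectByMax p.1 p.1 - selectByMax p.1 m)
        + b * (selectByMax p.1 p.2 - selectByMax p.1 m)) ^ 2) := by
    fun_prop
  refine (integrable_prod_iff hmeas.aestronglyMeasurable).2 ⟨ae_of_all _ fun x =>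
    integrable_sq_const_add_mul_selectByMax_sub_gaussianReal m w x
      (a * (selectByMax x x - selectByMax x m)) b, ?_⟩
  simp only [Real.norm_of_nonneg (sq_nonneg _),
    integral_sq_const_add_mul_selectByMax_sub_gaussianReal, mul_pow]
  exact ((integrable_sq_selectByMax_sub_gaussianReal m v).const_mul _).add (integrable_const _)

lemma integral_sq_weighted_selectByMax_sub_gaussianReal :
    ∫ p : (ℝ × ℝ) × (ℝ × ℝ),
      (a * (selectByMax p.1 p.1 - selectByMax p.1 m)
        + b * (selectByMax p.1 p.2 - selectByMax p.1 m)) ^ 2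
      ∂(((gaussianReal m.1 v).prod (gaussianReal m.2 v)).prod
        ((gaussianReal m.1 w).prod (gaussianReal m.2 w))) = a ^ 2 * v + b ^ 2 * w := by
  rw [integral_prod _ (integrable_sq_weighted_selectByMax_sub_gaussianReal m a b v w)]
  simp only [integral_sq_const_add_mul_selectByMax_sub_gaussianReal, mul_pow]
  rw [integral_add ((integrable_sq_selectByMax_sub_gaussianReal m v).const_mul _)
      (integrable_const _), integral_const_mul, integral_sq_selectByMax_sub_gaussianReal]
  simp

end TwoStage

lemma map_prodMk_prodMk_eq_prod_of_iIndepFun {Ω β : Type*} [MeasurableSpace Ω] [MeasurableSpace β]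
    {μ : Measure Ω} [IsProbabilityMeasure μ] {X₁ X₂ Y₁ Y₂ : Ω → β}
    (hX₁ : Measurable X₁) (hX₂ : Measurable X₂) (hY₁ : Measurable Y₁) (hY₂ : Measurable Y₂)
    (h : iIndepFun ![X₁, X₂, Y₁, Y₂] μ) :
    μ.map (fun ω => ((X₁ ω, X₂ ω), (Y₁ ω, Y₂ ω)))
      = ((μ.map X₁).prod (μ.map X₂)).prod ((μ.map Y₁).prod (μ.map Y₂)) := by
  have hmeas : ∀ i, Measurable (![X₁, X₂, Y₁, Y₂] i) := by
    intro i; fin_cases i <;> assumption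
  have hX : IndepFun X₁ X₂ μ := by simpa using h.indepFun (i := 0) (j := 1) (by decide)
  have hY : IndepFun Y₁ Y₂ μ := by simpa using h.indepFun (i := 2) (j := 3) (by decide)
  have hXY : IndepFun (fun ω => (X₁ ω, X₂ ω)) (fun ω => (Y₁ ω, Y₂ ω)) μ := by
    simpa using
      h.indepFun_prodMk_prodMk hmeas 0 1 2 3 (by decide) (by decide) (by decide) (by decide)
  rw [(indepFun_iff_map_prod_eq_prod_map_map (hX₁.prodMk hX₂).aemeasurable
      (hY₁.prodMk hY₂).aemeasurable).1 hXY,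
    (indepFun_iff_map_prod_eq_prod_map_map hX₁.aemeasurable hX₂.aemeasurable).1 hX,
    (indepFun_iff_map_prod_eq_prod_map_map hY₁.aemeasurable hY₂.aemeasurable).1 hY]

theorem stmt_2_general {Ω : Type} [MeasurableSpace Ω]
    (n₁ n₂ : ℕ) (hn₁ : 0 < n₁) (hn₂ : 0 < n₂) (σ : ℝ)
    (P : ℝ → ℝ → Measure Ω) (hP : ∀ μ₁ μ₂, IsProbabilityMeasure (P μ₁ μ₂))
    (X₁ X₂ Y₁ Y₂ : Ω → ℝ)
    (hmX₁ : Measurable X₁) (hmX₂ : Measurable X₂)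
    (hmY₁ : Measurable Y₁) (hmY₂ : Measurable Y₂)
    (hIndep : ∀ μ₁ μ₂ : ℝ, iIndepFun ![X₁, X₂, Y₁, Y₂] (P μ₁ μ₂))
    (hX₁ : ∀ μ₁ μ₂ : ℝ,
      Measure.map X₁ (P μ₁ μ₂) = gaussianReal μ₁ (Real.toNNReal (σ ^ 2 / n₁)))
    (hX₂ : ∀ μ₁ μ₂ : ℝ,
      Measure.map X₂ (P μ₁ μ₂) = gaussianReal μ₂ (Real.toNNReal (σ ^ 2 / n₁)))
    (hY₁ : ∀ μ₁ μ₂ : ℝ,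
      Measure.map Y₁ (P μ₁ μ₂) = gaussianReal μ₁ (Real.toNNReal (σ ^ 2 / n₂)))
    (hY₂ : ∀ μ₁ μ₂ : ℝ,
      Measure.map Y₂ (P μ₁ μ₂) = gaussianReal μ₂ (Real.toNNReal (σ ^ 2 / n₂)))
    (Ybar XS : Ω → ℝ) (μS : ℝ → ℝ → Ω → ℝ)
    (hYbar : Ybar = fun ω => if X₁ ω ≥ X₂ ω then Y₁ ω else Y₂ ω)
    (hXS : XS = fun ω => max (X₁ ω) (X₂ ω))
    (hμS : μS = fun μ₁ μ₂ ω => if X₁ ω ≥ X₂ ω then μ₁ else μ₂) :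
    ∀ μ₁ μ₂ : ℝ,
      (∫ ω, ((n₁ * XS ω + n₂ * Ybar ω) / ((n₁ : ℝ) + n₂) - μS μ₁ μ₂ ω) ^ 2 ∂(P μ₁ μ₂)) =
        σ ^ 2 / ((n₁ : ℝ) + n₂) := by
  subst hYbar hXS hμS
  intro μ₁ μ₂
  have := hP μ₁ μ₂
  have hn₁' : (n₁ : ℝ) ≠ 0 := by positivity
  have hn₂' : (n₂ : ℝ) ≠ 0 := by positivity
  set N : ℝ := n₁ + n₂
  have hN : N ≠ 0 := by positivity
  have hlaw := map_prodMk_prodMk_eq_prod_of_iIndepFun hmX₁ hmX₂ hmY₁ hmY₂ (hIndep μ₁ μ₂)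
  rw [hX₁, hX₂, hY₁, hY₂] at hlaw
  have hF := integrable_sq_weighted_selectByMax_sub_gaussianReal (μ₁, μ₂) (n₁ / N) (n₂ / N)
    (σ ^ 2 / n₁).toNNReal (σ ^ 2 / n₂).toNNReal
  rw [← hlaw] at hF
  calc _ = ∫ p, (n₁ / N * (selectByMax p.1 p.1 - selectByMax p.1 (μ₁, μ₂))
          + n₂ / N * (selectByMax p.1 p.2 - selectByMax p.1 (μ₁, μ₂))) ^ 2
          ∂((P μ₁ μ₂).map fun ω => ((X₁ ω, X₂ ω), (Y₁ ω, Y₂ ω))) := by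
        rw [integral_map (by fun_prop) hF.aestronglyMeasurable]
        congr with ω
        rw [selectByMax_self]
        simp only [selectByMax, ge_iff_le]
        field_simp
        ring
    _ = (n₁ / N) ^ 2 * (σ ^ 2 / n₁).toNNReal + (n₂ / N) ^ 2 * (σ ^ 2 / n₂).toNNReal := by
        rw [hlaw]
        exact integral_sq_weighted_selectByMax_sub_gaussianReal (μ₁, μ₂) _ _ _ _
    _ = σ ^ 2 / N := by
        rw [Real.coe_toNNReal _ (by positivity), Real.coe_toNNReal _ (by positivity)]
        field_simp
        ring

/-- In the two-stage drop-the-losers model, for every `(μ₁, μ₂)`, the estimator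
`δ_M = (n₁ X̄_S + n₂ Ȳ)/(n₁+n₂)` satisfies `E[(δ_M − μ_S)²] = σ²/(n₁+n₂)`,
i.e. it has constant risk `σ²/(n₁+n₂)` under squared error loss. -/
theorem stmt_2 {Ω : Type} [MeasurableSpace Ω]
    (n₁ n₂ : ℕ) (hn₁ : 0 < n₁) (hn₂ : 0 < n₂) (σ : ℝ) (hσ : 0 < σ)
    (P : ℝ → ℝ → Measure Ω) (hP : ∀ μ₁ μ₂, IsProbabilityMeasure (P μ₁ μ₂))
    (X₁ X₂ Y₁ Y₂ : Ω → ℝ)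
    (hmX₁ : Measurable X₁) (hmX₂ : Measurable X₂)
    (hmY₁ : Measurable Y₁) (hmY₂ : Measurable Y₂)
    (hIndep : ∀ μ₁ μ₂ : ℝ, iIndepFun ![X₁, X₂, Y₁, Y₂] (P μ₁ μ₂))
    (hX₁ : ∀ μ₁ μ₂ : ℝ,
      Measure.map X₁ (P μ₁ μ₂) = gaussianReal μ₁ (Real.toNNReal (σ ^ 2 / n₁)))
    (hX₂ : ∀ μ₁ μ₂ : ℝ,
      Measure.map X₂ (P μ₁ μ₂) = gaussianReal μ₂ (Real.toNNReal (σ ^ 2 / n₁)))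
    (hY₁ : ∀ μ₁ μ₂ : ℝ,
      Measure.map Y₁ (P μ₁ μ₂) = gaussianReal μ₁ (Real.toNNReal (σ ^ 2 / n₂)))
    (hY₂ : ∀ μ₁ μ₂ : ℝ,
      Measure.map Y₂ (P μ₁ μ₂) = gaussianReal μ₂ (Real.toNNReal (σ ^ 2 / n₂)))
    (Ybar XS : Ω → ℝ) (μS : ℝ → ℝ → Ω → ℝ)
    (hYbar : Ybar = fun ω => if X₁ ω ≥ X₂ ω then Y₁ ω else Y₂ ω)
    (hXS : XS = fun ω => max (X₁ ω) (X₂ ω))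
    (hμS : μS = fun μ₁ μ₂ ω => if X₁ ω ≥ X₂ ω then μ₁ else μ₂) :
    ∀ μ₁ μ₂ : ℝ,
      (∫ ω, ((n₁ * XS ω + n₂ * Ybar ω) / ((n₁ : ℝ) + n₂) - μS μ₁ μ₂ ω) ^ 2 ∂(P μ₁ μ₂)) =
        σ ^ 2 / ((n₁ : ℝ) + n₂) :=
  stmt_2_general n₁ n₂ hn₁ hn₂ σ P hP X₁ X₂ Y₁ Y₂ hmX₁ hmX₂ hmY₁ hmY₂ hIndep hX₁ hX₂ hY₁ hY₂ Ybar XS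
    μS hYbar hXS hμS
end

section
/- For every (μ₁, μ₂) ∈ ℝ², E[(max(X̄₁, X̄₂) − μ_S)²] = σ²/n₁. Consequently, the single-stage estimator δ₀ = X̄_S is uniformly dominated by δ_M = (n₁X̄_S + n₂Ȳ)/(n₁+n₂): R((μ₁,μ₂), δ_M) = σ²/(n₁+n₂) < σ²/n₁ = R((μ₁,μ₂), δ₀) for all (μ₁,μ₂) ∈ ℝ². -/
/-!
The reflection `(x₁, x₂) ↦ (μ₁ + μ₂ - x₂, μ₁ + μ₂ - x₁)` preserves the law of `(X̄₁, X̄₂)`,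
whose coordinates have the same variance `σ²/n₁`, and exchanges which coordinate is selected.
Hence the squared selection error plus its reflection is `(X̄₁ - μ₁)² + (X̄₂ - μ₂)²`, and the
risk of `X̄_S` is half of `2σ²/n₁`.

For `δ_M`, write `δ_M - μ_S = a (X̄_S - μ_S) + b (Ȳ - μ_S)` with `a = n₁/(n₁+n₂)`, `b = n₂/(n₁+n₂)`.
On an event determined by `(X̄₁, X̄₂)`, `Ȳ - μ_S` is `Ȳᵢ - μᵢ`, which is independent of that event,
centred and of variance `σ²/n₂`. So the cross term vanishes and the risk is
`a² σ²/n₁ + b² σ²/n₂ = σ²/(n₁+n₂)`.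
-/

open MeasureTheory ProbabilityTheory
open scoped NNReal

namespace ProbabilityTheory

variable {Ω : Type*} {mΩ : MeasurableSpace Ω} {P : Measure Ω} {X : Ω → ℝ} {μ : ℝ} {v : ℝ≥0}

lemma integral_sub_sq_gaussianReal : ∫ x, (x - μ) ^ 2 ∂gaussianReal μ v = v := by
  rw [← variance_fun_id_gaussianReal (μ := μ) (v := v), variance_eq_integral aemeasurable_id',
    integral_id_gaussianReal]

lemma HasLaw.integral_sub_gaussianReal (hX : HasLaw X (gaussianReal μ v) P) :
    ∫ ω, (X ω - μ) ∂P = 0 := by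
  rw [(gaussianReal_sub_const hX μ).integral_eq, integral_id_gaussianReal, sub_self]

lemma HasLaw.integral_sub_sq_gaussianReal (hX : HasLaw X (gaussianReal μ v) P) :
    ∫ ω, (X ω - μ) ^ 2 ∂P = v :=
  (hX.integral_comp (f := fun x => (x - μ) ^ 2) (by fun_prop)).trans
    ProbabilityTheory.integral_sub_sq_gaussianReal

lemma HasLaw.memLp_sub_gaussianReal (hX : HasLaw X (gaussianReal μ v) P) :
    MemLp (fun ω => X ω - μ) 2 P :=
  (gaussianReal_sub_const hX μ).hasGaussianLaw.memLp_two

end ProbabilityTheory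

section Selection

variable {Ω α : Type*} {mΩ : MeasurableSpace Ω} {mα : MeasurableSpace α} {P : Measure Ω}
  {U : Ω → α} {s : Set α} [DecidablePred (· ∈ s)] {V₁ V₂ : Ω → ℝ}

lemma integral_comp_mul_ite_of_indepFun (hU : Measurable U) (hs : MeasurableSet s) {h : α → ℝ}
    (hh : Measurable h) (hhU : Integrable (fun ω => h (U ω)) P)
    (hV₁ : Integrable V₁ P) (hV₂ : Integrable V₂ P) (h₁ : IndepFun U V₁ P) (h₂ : IndepFun U V₂ P)
    {c : ℝ} (hc₁ : ∫ ω, V₁ ω ∂P = c) (hc₂ : ∫ ω, V₂ ω ∂P = c) :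
    ∫ ω, h (U ω) * (if U ω ∈ s then V₁ ω else V₂ ω) ∂P = c * ∫ ω, h (U ω) ∂P := by
  have hsplit : ∀ ω, h (U ω) * (if U ω ∈ s then V₁ ω else V₂ ω)
      = s.indicator h (U ω) * V₁ ω + sᶜ.indicator h (U ω) * V₂ ω := by
    intro ω
    by_cases hω : U ω ∈ s <;> simp [hω]
  have hint {t : Set α} (ht : MeasurableSet t) : Integrable (fun ω => t.indicator h (U ω)) P :=
    hhU.mono ((hh.indicator ht).comp hU).aestronglyMeasurable
      (ae_of_all _ fun ω => norm_indicator_le_norm_self h (U ω))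
  have h₁' : IndepFun (fun ω => s.indicator h (U ω)) V₁ P :=
    h₁.comp (hh.indicator hs) measurable_id
  have h₂' : IndepFun (fun ω => sᶜ.indicator h (U ω)) V₂ P :=
    h₂.comp (hh.indicator hs.compl) measurable_id
  have hi₁ : Integrable (fun ω => s.indicator h (U ω) * V₁ ω) P := h₁'.integrable_mul (hint hs) hV₁
  have hi₂ : Integrable (fun ω => sᶜ.indicator h (U ω) * V₂ ω) P :=
    h₂'.integrable_mul (hint hs.compl) hV₂
  calc ∫ ω, h (U ω) * (if U ω ∈ s then V₁ ω else V₂ ω) ∂P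
      = ∫ ω, (s.indicator h (U ω) * V₁ ω + sᶜ.indicator h (U ω) * V₂ ω) ∂P :=
        integral_congr_ae (ae_of_all _ hsplit)
    _ = (∫ ω, s.indicator h (U ω) ∂P) * c + (∫ ω, sᶜ.indicator h (U ω) ∂P) * c := by
        rw [integral_add hi₁ hi₂,
          h₁'.integral_fun_mul_eq_mul_integral (hint hs).1 hV₁.1,
          h₂'.integral_fun_mul_eq_mul_integral (hint hs.compl).1 hV₂.1, hc₁, hc₂]
    _ = c * ∫ ω, h (U ω) ∂P := by
        rw [← add_mul, ← integral_add (hint hs) (hint hs.compl)]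
        simp only [Set.indicator_self_add_compl_apply]
        ring

lemma integral_sq_ite_of_indepFun [IsProbabilityMeasure P] (hU : Measurable U)
    (hs : MeasurableSet s) (hV₁ : MemLp V₁ 2 P) (hV₂ : MemLp V₂ 2 P)
    (h₁ : IndepFun U V₁ P) (h₂ : IndepFun U V₂ P)
    {t : ℝ} (ht₁ : ∫ ω, V₁ ω ^ 2 ∂P = t) (ht₂ : ∫ ω, V₂ ω ^ 2 ∂P = t) :
    ∫ ω, (if U ω ∈ s then V₁ ω else V₂ ω) ^ 2 ∂P = t := by
  have key := integral_comp_mul_ite_of_indepFun hU hs measurable_const (integrable_const 1)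
    hV₁.integrable_sq hV₂.integrable_sq (h₁.comp measurable_id (measurable_id.pow_const 2))
    (h₂.comp measurable_id (measurable_id.pow_const 2)) ht₁ ht₂
  simpa only [apply_ite (· ^ 2), mul_ite, one_mul, integral_const, probReal_univ, smul_eq_mul,
    mul_one] using key

lemma integral_add_sq_of_integral_mul_eq_zero {Z W : Ω → ℝ} (hZ : MemLp Z 2 P)
    (hW : MemLp W 2 P) (hZW : ∫ ω, Z ω * W ω ∂P = 0) (a b : ℝ) :
    ∫ ω, (a * Z ω + b * W ω) ^ 2 ∂P = a ^ 2 * ∫ ω, Z ω ^ 2 ∂P + b ^ 2 * ∫ ω, W ω ^ 2 ∂P := by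
  have hexpand : ∀ ω, (a * Z ω + b * W ω) ^ 2
      = a ^ 2 * Z ω ^ 2 + (2 * a * b) * (Z ω * W ω) + b ^ 2 * W ω ^ 2 := fun ω => by ring
  have hZZ := hZ.integrable_sq.const_mul (a ^ 2)
  have hZW' : Integrable (fun ω => (2 * a * b) * (Z ω * W ω)) P :=
    (hZ.integrable_mul hW).const_mul _
  have hWW := hW.integrable_sq.const_mul (b ^ 2)
  have hZZW : Integrable (fun ω => a ^ 2 * Z ω ^ 2 + (2 * a * b) * (Z ω * W ω)) P := hZZ.add hZW'
  simp only [hexpand]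
  rw [integral_add hZZW hWW, integral_add hZZ hZW',
    integral_const_mul, integral_const_mul, integral_const_mul, hZW]
  ring

theorem integral_sq_add_ite_of_indepFun [IsProbabilityMeasure P] (hU : Measurable U)
    (hs : MeasurableSet s) {f : α → ℝ} (hf : Measurable f) (hfU : MemLp (fun ω => f (U ω)) 2 P)
    (hV₁ : MemLp V₁ 2 P) (hV₂ : MemLp V₂ 2 P) (h₁ : IndepFun U V₁ P) (h₂ : IndepFun U V₂ P)
    (hm₁ : ∫ ω, V₁ ω ∂P = 0) (hm₂ : ∫ ω, V₂ ω ∂P = 0)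
    {t : ℝ} (ht₁ : ∫ ω, V₁ ω ^ 2 ∂P = t) (ht₂ : ∫ ω, V₂ ω ^ 2 ∂P = t) (a b : ℝ) :
    ∫ ω, (a * f (U ω) + b * (if U ω ∈ s then V₁ ω else V₂ ω)) ^ 2 ∂P
      = a ^ 2 * ∫ ω, f (U ω) ^ 2 ∂P + b ^ 2 * t := by
  let _ : DecidablePred (· ∈ U ⁻¹' s) := fun ω => ‹DecidablePred (· ∈ s)› (U ω)
  have hW : MemLp (fun ω => if U ω ∈ s then V₁ ω else V₂ ω) 2 P :=
    MemLp.piecewise (s := U ⁻¹' s) (hU hs) (hV₁.restrict _) (hV₂.restrict _)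
  have hcross := integral_comp_mul_ite_of_indepFun hU hs hf (hfU.integrable one_le_two)
    (hV₁.integrable one_le_two) (hV₂.integrable one_le_two) h₁ h₂ hm₁ hm₂
  rw [zero_mul] at hcross
  rw [integral_add_sq_of_integral_mul_eq_zero hfU hW hcross,
    integral_sq_ite_of_indepFun hU hs hV₁ hV₂ h₁ h₂ ht₁ ht₂]

end Selection

/-- `max p.1 p.2 - μ_S` in the paper's notation; a tie selects the first coordinate. -/
noncomputable def selectionError (μ₁ μ₂ : ℝ) (p : ℝ × ℝ) : ℝ :=
  if p.2 ≤ p.1 then p.1 - μ₁ else p.2 - μ₂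

lemma measurable_selectionError (μ₁ μ₂ : ℝ) : Measurable (selectionError μ₁ μ₂) :=
  Measurable.ite (measurableSet_le measurable_snd measurable_fst) (by fun_prop) (by fun_prop)

lemma measurePreserving_reflect_gaussianReal_prod (μ₁ μ₂ : ℝ) (v : ℝ≥0) :
    MeasurePreserving (fun p : ℝ × ℝ => (μ₁ + μ₂ - p.2, μ₁ + μ₂ - p.1))
      ((gaussianReal μ₁ v).prod (gaussianReal μ₂ v))
      ((gaussianReal μ₁ v).prod (gaussianReal μ₂ v)) := by
  have h₁ : MeasurePreserving (fun x => μ₁ + μ₂ - x) (gaussianReal μ₂ v) (gaussianReal μ₁ v) :=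
    ⟨by fun_prop, by rw [gaussianReal_map_const_sub, add_sub_cancel_right]⟩
  have h₂ : MeasurePreserving (fun x => μ₁ + μ₂ - x) (gaussianReal μ₁ v) (gaussianReal μ₂ v) :=
    ⟨by fun_prop, by rw [gaussianReal_map_const_sub, add_sub_cancel_left]⟩
  exact (h₁.prod h₂).comp Measure.measurePreserving_swap

lemma memLp_selectionError_gaussianReal_prod (μ₁ μ₂ : ℝ) (v : ℝ≥0) :
    MemLp (selectionError μ₁ μ₂) 2 ((gaussianReal μ₁ v).prod (gaussianReal μ₂ v)) := by
  have h₁ := (HasLaw.id (μ := gaussianReal μ₁ v)).memLp_sub_gaussianReal.comp_fst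
    (gaussianReal μ₂ v)
  have h₂ := (HasLaw.id (μ := gaussianReal μ₂ v)).memLp_sub_gaussianReal.comp_snd
    (gaussianReal μ₁ v)
  exact MemLp.piecewise (s := {p : ℝ × ℝ | p.2 ≤ p.1})
    (measurableSet_le measurable_snd measurable_fst) (h₁.restrict _) (h₂.restrict _)

lemma selectionError_sq_add_selectionError_reflect_sq (μ₁ μ₂ : ℝ) (p : ℝ × ℝ) :
    selectionError μ₁ μ₂ p ^ 2 + selectionError μ₁ μ₂ (μ₁ + μ₂ - p.2, μ₁ + μ₂ - p.1) ^ 2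
      = (p.1 - μ₁) ^ 2 + (p.2 - μ₂) ^ 2 := by
  unfold selectionError
  rcases le_or_gt p.2 p.1 with h | h
  · rw [if_pos h, if_pos (by linarith)]
    ring
  · rw [if_neg h.not_ge, if_neg (not_le.mpr (by linarith))]
    ring

theorem integral_selectionError_sq_gaussianReal_prod (μ₁ μ₂ : ℝ) (v : ℝ≥0) :
    ∫ p, selectionError μ₁ μ₂ p ^ 2 ∂((gaussianReal μ₁ v).prod (gaussianReal μ₂ v)) = v := by
  have hT := measurePreserving_reflect_gaussianReal_prod μ₁ μ₂ v
  have hE := memLp_selectionError_gaussianReal_prod μ₁ μ₂ v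
  have hinv := integral_map hT.aemeasurable
    (f := fun p => selectionError μ₁ μ₂ p ^ 2) (hT.map_eq ▸ hE.integrable_sq.aestronglyMeasurable)
  rw [hT.map_eq] at hinv
  have h₁ : MemLp (fun p : ℝ × ℝ => p.1 - μ₁) 2 ((gaussianReal μ₁ v).prod (gaussianReal μ₂ v)) :=
    (HasLaw.id (μ := gaussianReal μ₁ v)).memLp_sub_gaussianReal.comp_fst (gaussianReal μ₂ v)
  have h₂ : MemLp (fun p : ℝ × ℝ => p.2 - μ₂) 2 ((gaussianReal μ₁ v).prod (gaussianReal μ₂ v)) :=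
    (HasLaw.id (μ := gaussianReal μ₂ v)).memLp_sub_gaussianReal.comp_snd (gaussianReal μ₁ v)
  have hsum := integral_add hE.integrable_sq (hE.comp_measurePreserving hT).integrable_sq
  simp only [Function.comp_apply, selectionError_sq_add_selectionError_reflect_sq, ← hinv] at hsum
  rw [integral_add h₁.integrable_sq h₂.integrable_sq, integral_fun_fst (fun x => (x - μ₁) ^ 2),
    integral_fun_snd (fun x => (x - μ₂) ^ 2)] at hsum
  simp only [probReal_univ, integral_sub_sq_gaussianReal, smul_eq_mul, one_mul] at hsum
  linarith

namespace ProbabilityTheory.HasLaw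

variable {Ω : Type*} {mΩ : MeasurableSpace Ω} {P : Measure Ω} {U : Ω → ℝ × ℝ} {μ₁ μ₂ : ℝ}
  {v : ℝ≥0}

lemma memLp_selectionError (hUm : Measurable U)
    (hU : HasLaw U ((gaussianReal μ₁ v).prod (gaussianReal μ₂ v)) P) :
    MemLp (fun ω => selectionError μ₁ μ₂ (U ω)) 2 P :=
  (memLp_selectionError_gaussianReal_prod μ₁ μ₂ v).comp_measurePreserving
    (hU.measurePreserving hUm)

lemma integral_selectionError_sq (hU : HasLaw U ((gaussianReal μ₁ v).prod (gaussianReal μ₂ v)) P) :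
    ∫ ω, selectionError μ₁ μ₂ (U ω) ^ 2 ∂P = v :=
  (hU.integral_comp ((measurable_selectionError μ₁ μ₂).pow_const 2).aestronglyMeasurable).trans
    (integral_selectionError_sq_gaussianReal_prod μ₁ μ₂ v)

end ProbabilityTheory.HasLaw

lemma max_sub_ite_eq_selectionError (μ₁ μ₂ x₁ x₂ : ℝ) :
    max x₁ x₂ - (if x₁ ≥ x₂ then μ₁ else μ₂) = selectionError μ₁ μ₂ (x₁, x₂) := by
  unfold selectionError
  split_ifs with h
  · rw [max_eq_left h]
  · rw [max_eq_right (le_of_not_ge h)]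

lemma weightedMean_sub_ite_eq (μ₁ μ₂ x₁ x₂ y₁ y₂ m₁ m₂ : ℝ) (hm : m₁ + m₂ ≠ 0) :
    (m₁ * max x₁ x₂ + m₂ * (if x₁ ≥ x₂ then y₁ else y₂)) / (m₁ + m₂)
        - (if x₁ ≥ x₂ then μ₁ else μ₂)
      = m₁ / (m₁ + m₂) * selectionError μ₁ μ₂ (x₁, x₂)
        + m₂ / (m₁ + m₂) * (if (x₁, x₂) ∈ {p : ℝ × ℝ | p.2 ≤ p.1} then y₁ - μ₁ else y₂ - μ₂) := by
  rw [← max_sub_ite_eq_selectionError]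
  simp only [ge_iff_le, Set.mem_ofPred_eq]
  split_ifs <;> field_simp <;> ring

/-- In the two-stage drop-the-losers model, for every `(μ₁, μ₂)`:
`E[(max(X̄₁,X̄₂) − μ_S)²] = σ²/n₁` (the risk of the single-stage estimator `δ₀ = X̄_S`),
the risk of `δ_M = (n₁ X̄_S + n₂ Ȳ)/(n₁+n₂)` equals `σ²/(n₁+n₂)`, and
`σ²/(n₁+n₂) < σ²/n₁`; hence `δ₀` is uniformly dominated by `δ_M`. -/
theorem stmt_7 {Ω : Type} [MeasurableSpace Ω]
    (n₁ n₂ : ℕ) (hn₁ : 0 < n₁) (hn₂ : 0 < n₂) (σ : ℝ) (hσ : 0 < σ)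
    (P : ℝ → ℝ → Measure Ω) (hP : ∀ μ₁ μ₂, IsProbabilityMeasure (P μ₁ μ₂))
    (X₁ X₂ Y₁ Y₂ : Ω → ℝ)
    (hmX₁ : Measurable X₁) (hmX₂ : Measurable X₂)
    (hmY₁ : Measurable Y₁) (hmY₂ : Measurable Y₂)
    (hIndep : ∀ μ₁ μ₂ : ℝ, iIndepFun ![X₁, X₂, Y₁, Y₂] (P μ₁ μ₂))
    (hX₁ : ∀ μ₁ μ₂ : ℝ,
      Measure.map X₁ (P μ₁ μ₂) = gaussianReal μ₁ (Real.toNNReal (σ ^ 2 / n₁)))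
    (hX₂ : ∀ μ₁ μ₂ : ℝ,
      Measure.map X₂ (P μ₁ μ₂) = gaussianReal μ₂ (Real.toNNReal (σ ^ 2 / n₁)))
    (hY₁ : ∀ μ₁ μ₂ : ℝ,
      Measure.map Y₁ (P μ₁ μ₂) = gaussianReal μ₁ (Real.toNNReal (σ ^ 2 / n₂)))
    (hY₂ : ∀ μ₁ μ₂ : ℝ,
      Measure.map Y₂ (P μ₁ μ₂) = gaussianReal μ₂ (Real.toNNReal (σ ^ 2 / n₂)))
    (Ybar XS : Ω → ℝ) (μS : ℝ → ℝ → Ω → ℝ)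
    (hYbar : Ybar = fun ω => if X₁ ω ≥ X₂ ω then Y₁ ω else Y₂ ω)
    (hXS : XS = fun ω => max (X₁ ω) (X₂ ω))
    (hμS : μS = fun μ₁ μ₂ ω => if X₁ ω ≥ X₂ ω then μ₁ else μ₂) :
    ∀ μ₁ μ₂ : ℝ,
      (∫ ω, (XS ω - μS μ₁ μ₂ ω) ^ 2 ∂(P μ₁ μ₂)) = σ ^ 2 / n₁ ∧
      (∫ ω, ((n₁ * XS ω + n₂ * Ybar ω) / ((n₁ : ℝ) + n₂) - μS μ₁ μ₂ ω) ^ 2 ∂(P μ₁ μ₂)) =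
        σ ^ 2 / ((n₁ : ℝ) + n₂) ∧
      σ ^ 2 / ((n₁ : ℝ) + n₂) < σ ^ 2 / n₁ := by
  intro μ₁ μ₂
  have := hP μ₁ μ₂
  subst hXS hμS hYbar
  have hmeas : ∀ i, Measurable (![X₁, X₂, Y₁, Y₂] i) := fun i => by fin_cases i <;> assumption
  have hUm : Measurable fun ω => (X₁ ω, X₂ ω) := hmX₁.prodMk hmX₂
  have hU : HasLaw (fun ω => (X₁ ω, X₂ ω)) ((gaussianReal μ₁ (Real.toNNReal (σ ^ 2 / n₁))).prod
      (gaussianReal μ₂ (Real.toNNReal (σ ^ 2 / n₁)))) (P μ₁ μ₂) :=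
    IndepFun.hasLaw_prod ⟨hmX₁.aemeasurable, hX₁ μ₁ μ₂⟩ ⟨hmX₂.aemeasurable, hX₂ μ₁ μ₂⟩
      (by simpa using (hIndep μ₁ μ₂).indepFun (i := 0) (j := 1) (by decide))
  have hUY (k : Fin 4) (hk₀ : 0 ≠ k) (hk₁ : 1 ≠ k) (c : ℝ) :
      IndepFun (fun ω => (X₁ ω, X₂ ω)) (fun ω => ![X₁, X₂, Y₁, Y₂] k ω - c) (P μ₁ μ₂) := by
    simpa [Function.comp_def] using ((hIndep μ₁ μ₂).indepFun_prodMk hmeas 0 1 k hk₀ hk₁).comp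
      measurable_id (measurable_id.sub_const c)
  have hLY₁ : HasLaw Y₁ _ (P μ₁ μ₂) := ⟨hmY₁.aemeasurable, hY₁ μ₁ μ₂⟩
  have hLY₂ : HasLaw Y₂ _ (P μ₁ μ₂) := ⟨hmY₂.aemeasurable, hY₂ μ₁ μ₂⟩
  have hv (n : ℕ) : (Real.toNNReal (σ ^ 2 / n) : ℝ) = σ ^ 2 / n :=
    Real.coe_toNNReal _ (by positivity)
  refine ⟨?_, ?_, div_lt_div_of_pos_left (by positivity) (by positivity)
    (lt_add_of_pos_right _ (by positivity))⟩
  · simp only [max_sub_ite_eq_selectionError, hU.integral_selectionError_sq, hv]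
  · simp only [weightedMean_sub_ite_eq _ _ _ _ _ _ _ _ (by positivity : (n₁ : ℝ) + n₂ ≠ 0)]
    rw [integral_sq_add_ite_of_indepFun hUm (measurableSet_le measurable_snd measurable_fst)
      (measurable_selectionError μ₁ μ₂) (hU.memLp_selectionError hUm)
      hLY₁.memLp_sub_gaussianReal hLY₂.memLp_sub_gaussianReal
      (hUY 2 (by decide) (by decide) μ₁) (hUY 3 (by decide) (by decide) μ₂)
      hLY₁.integral_sub_gaussianReal hLY₂.integral_sub_gaussianReal
      hLY₁.integral_sub_sq_gaussianReal hLY₂.integral_sub_sq_gaussianReal,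
      hU.integral_selectionError_sq, hv, hv]
    field_simp
end

section
/- Fix θ ≥ 0, d₁ ∈ (−∞, 0], d₂ ∈ ℝ, σ > 0 and positive integers n₁, n₂, and let g(t) = [φ(√n₁(t+d₁−θ)/σ) + φ(√n₁(t+d₁+θ)/σ)] · φ(√n₂(t+d₂)/σ) · φ(√n₁ t/σ). Then (∫_{−∞}^{∞} t·g(t) dt) / (∫_{−∞}^{∞} g(t) dt) = (n₁θ/(2n₁+n₂)) · (1 − e^{−c})/(1 + e^{−c}) − (n₁d₁ + n₂d₂)/(2n₁+n₂), where c = (2θ/σ²) · n₁((n₁+n₂)d₁ − n₂d₂)/(2n₁+n₂). (This is the conditional expectation E[S₁ | (D₁,D₂) = (d₁,d₂)] of S₁ = X̄_S − μ_S given (D₁,D₂) in the two-stage drop-the-losers model.) -/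
open MeasureTheory Real

theorem integral_exp_neg_mul_sq_sub (p m : ℝ) :
    ∫ t : ℝ, exp (-p * (t - m) ^ 2) = √(π / p) := by
  rw [integral_sub_right_eq_self (fun t : ℝ => exp (-p * t ^ 2)) m, integral_gaussian]

theorem integral_mul_exp_neg_mul_sq (p : ℝ) : ∫ t : ℝ, t * exp (-p * t ^ 2) = 0 := by
  have h := integral_neg_eq_self (fun t : ℝ => t * exp (-p * t ^ 2)) volume
  simp only [neg_sq, neg_mul, integral_neg] at h ⊢
  linarith

theorem integrable_mul_exp_neg_mul_sq_sub {p : ℝ} (hp : 0 < p) (m : ℝ) :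
    Integrable (fun t : ℝ => t * exp (-p * (t - m) ^ 2)) := by
  refine (((integrable_mul_exp_neg_mul_sq hp).comp_sub_right m).add
    (((integrable_exp_neg_mul_sq hp).comp_sub_right m).const_mul m)).congr
    (ae_of_all _ fun t => ?_)
  simp only [Pi.add_apply]
  ring

theorem integral_mul_exp_neg_mul_sq_sub {p : ℝ} (hp : 0 < p) (m : ℝ) :
    ∫ t : ℝ, t * exp (-p * (t - m) ^ 2) = m * √(π / p) := by
  have hcentred : ∫ t : ℝ, (t - m) * exp (-p * (t - m) ^ 2) = 0 := by
    rw [integral_sub_right_eq_self (fun t : ℝ => t * exp (-p * t ^ 2)) m,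
      integral_mul_exp_neg_mul_sq]
  simp_rw [sub_mul] at hcentred
  rwa [integral_sub (integrable_mul_exp_neg_mul_sq_sub hp m)
      (((integrable_exp_neg_mul_sq hp).comp_sub_right m).const_mul m),
    integral_const_mul, integral_exp_neg_mul_sq_sub, sub_eq_zero] at hcentred

section GaussianMixture

variable {p : ℝ} (w₁ w₂ m₁ m₂ : ℝ)

theorem integral_gaussian_mixture (hp : 0 < p) :
    ∫ t : ℝ, (w₁ * exp (-p * (t - m₁) ^ 2) + w₂ * exp (-p * (t - m₂) ^ 2))
      = (w₁ + w₂) * √(π / p) := by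
  rw [integral_add (((integrable_exp_neg_mul_sq hp).comp_sub_right m₁).const_mul w₁)
      (((integrable_exp_neg_mul_sq hp).comp_sub_right m₂).const_mul w₂),
    integral_const_mul, integral_const_mul, integral_exp_neg_mul_sq_sub,
    integral_exp_neg_mul_sq_sub, add_mul]

theorem integral_mul_gaussian_mixture (hp : 0 < p) :
    ∫ t : ℝ, t * (w₁ * exp (-p * (t - m₁) ^ 2) + w₂ * exp (-p * (t - m₂) ^ 2))
      = (w₁ * m₁ + w₂ * m₂) * √(π / p) := by
  simp_rw [mul_add, mul_left_comm _ w₁, mul_left_comm _ w₂]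
  rw [integral_add ((integrable_mul_exp_neg_mul_sq_sub hp m₁).const_mul w₁)
      ((integrable_mul_exp_neg_mul_sq_sub hp m₂).const_mul w₂),
    integral_const_mul, integral_const_mul, integral_mul_exp_neg_mul_sq_sub hp,
    integral_mul_exp_neg_mul_sq_sub hp]
  ring

end GaussianMixture

/-- The constant term left over when `a (t + e)² + b (t + d)² + a t²` is written as
`(2a + b) (t - m)² + sqRemainder a b e d`. -/
noncomputable def sqRemainder (a b e d : ℝ) : ℝ :=
  a * e ^ 2 + b * d ^ 2 - (a * e + b * d) ^ 2 / (2 * a + b)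

theorem sqRemainder_add_sub_sqRemainder_sub {a b : ℝ} (hab : 2 * a + b ≠ 0) (e d θ : ℝ) :
    sqRemainder a b (e + θ) d - sqRemainder a b (e - θ) d
      = 4 * θ * (a * ((a + b) * e - b * d) / (2 * a + b)) := by
  -- `field_simp` normalises the denominator to `a * 2 + b` before looking for it in context
  have hab' : a * 2 + b ≠ 0 := by rwa [mul_comm]
  unfold sqRemainder
  field_simp
  ring

theorem normPdf_mul_normPdf_mul_normPdf_sqrt {a b σ : ℝ} (ha : 0 ≤ a) (hb : 0 ≤ b)
    (hσ : σ ≠ 0) (hab : 2 * a + b ≠ 0) (e d t : ℝ) :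
    normPdf (√a * (t + e) / σ) * normPdf (√b * (t + d) / σ) * normPdf (√a * t / σ)
      = (√(2 * π))⁻¹ ^ 3 * exp (-(sqRemainder a b e d / (2 * σ ^ 2)))
          * exp (-((2 * a + b) / (2 * σ ^ 2)) * (t - -(a * e + b * d) / (2 * a + b)) ^ 2) := by
  have hab' : a * 2 + b ≠ 0 := by rwa [mul_comm]
  simp only [normPdf, div_pow, mul_pow, sq_sqrt ha, sq_sqrt hb]
  have hexp : exp (-(a * (t + e) ^ 2 / σ ^ 2) / 2) * exp (-(b * (t + d) ^ 2 / σ ^ 2) / 2)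
        * exp (-(a * t ^ 2 / σ ^ 2) / 2)
      = exp (-(sqRemainder a b e d / (2 * σ ^ 2)))
          * exp (-((2 * a + b) / (2 * σ ^ 2)) * (t - -(a * e + b * d) / (2 * a + b)) ^ 2) := by
    simp only [← exp_add, sqRemainder]
    congr 1
    field_simp
    ring
  linear_combination (√(2 * π))⁻¹ ^ 3 * hexp

theorem stmt_9_general (n₁ n₂ : ℕ) (hn₁ : 0 < n₁) (σ : ℝ) (hσ : 0 < σ)
    (θ : ℝ) (d₁ : ℝ) (d₂ : ℝ)
    (g : ℝ → ℝ)
    (hg : g = fun t =>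
      (normPdf (Real.sqrt n₁ * (t + d₁ - θ) / σ) +
        normPdf (Real.sqrt n₁ * (t + d₁ + θ) / σ)) *
        normPdf (Real.sqrt n₂ * (t + d₂) / σ) * normPdf (Real.sqrt n₁ * t / σ))
    (c : ℝ)
    (hc : c = (2 * θ / σ ^ 2) * ((n₁ : ℝ) * (((n₁ : ℝ) + n₂) * d₁ - n₂ * d₂) /
      (2 * (n₁ : ℝ) + n₂))) :
    (∫ t, t * g t) / (∫ t, g t) =
      ((n₁ : ℝ) * θ / (2 * (n₁ : ℝ) + n₂)) *
          ((1 - Real.exp (-c)) / (1 + Real.exp (-c))) -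
        ((n₁ : ℝ) * d₁ + n₂ * d₂) / (2 * (n₁ : ℝ) + n₂) := by
  have hA : (0 : ℝ) < 2 * n₁ + n₂ := by positivity
  have hp : (0 : ℝ) < (2 * n₁ + n₂) / (2 * σ ^ 2) := by positivity
  have hprod := normPdf_mul_normPdf_mul_normPdf_sqrt (Nat.cast_nonneg n₁) (Nat.cast_nonneg n₂)
    hσ.ne' hA.ne'
  have hweight : exp (-(sqRemainder n₁ n₂ (d₁ + θ) d₂ / (2 * σ ^ 2)))
      = exp (-(sqRemainder n₁ n₂ (d₁ - θ) d₂ / (2 * σ ^ 2))) * exp (-c) := by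
    rw [← exp_add, eq_add_of_sub_eq (sqRemainder_add_sub_sqRemainder_sub hA.ne' d₁ d₂ θ), hc]
    congr 1
    field_simp
    ring
  simp only [hg, add_mul, add_sub_assoc, add_assoc, hprod]
  rw [integral_mul_gaussian_mixture _ _ _ _ hp, integral_gaussian_mixture _ _ _ _ hp,
    mul_div_mul_right _ _ (sqrt_pos.mpr (by positivity)).ne', hweight]
  field_simp
  ring

/-- The conditional expectation `E[S₁ | (D₁,D₂) = (d₁,d₂)]` in the two-stage
drop-the-losers model: with
`g(t) = [φ(√n₁(t+d₁−θ)/σ) + φ(√n₁(t+d₁+θ)/σ)] φ(√n₂(t+d₂)/σ) φ(√n₁ t/σ)`,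
`(∫ t g(t) dt)/(∫ g(t) dt) = (n₁θ/(2n₁+n₂))(1−e^{−c})/(1+e^{−c}) − (n₁d₁+n₂d₂)/(2n₁+n₂)`
where `c = (2θ/σ²) n₁((n₁+n₂)d₁ − n₂d₂)/(2n₁+n₂)`. -/
theorem stmt_9 (n₁ n₂ : ℕ) (hn₁ : 0 < n₁) (hn₂ : 0 < n₂) (σ : ℝ) (hσ : 0 < σ)
    (θ : ℝ) (hθ : 0 ≤ θ) (d₁ : ℝ) (hd₁ : d₁ ≤ 0) (d₂ : ℝ)
    (g : ℝ → ℝ)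
    (hg : g = fun t =>
      (normPdf (Real.sqrt n₁ * (t + d₁ - θ) / σ) +
        normPdf (Real.sqrt n₁ * (t + d₁ + θ) / σ)) *
        normPdf (Real.sqrt n₂ * (t + d₂) / σ) * normPdf (Real.sqrt n₁ * t / σ))
    (c : ℝ)
    (hc : c = (2 * θ / σ ^ 2) * ((n₁ : ℝ) * (((n₁ : ℝ) + n₂) * d₁ - n₂ * d₂) /
      (2 * (n₁ : ℝ) + n₂))) :
    (∫ t, t * g t) / (∫ t, g t) =
      ((n₁ : ℝ) * θ / (2 * (n₁ : ℝ) + n₂)) *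
          ((1 - Real.exp (-c)) / (1 + Real.exp (-c))) -
        ((n₁ : ℝ) * d₁ + n₂ * d₂) / (2 * (n₁ : ℝ) + n₂) :=
  stmt_9_general n₁ n₂ hn₁ σ hσ θ d₁ d₂ g hg c hc
end

section
/- Fix d₁ ∈ (−∞, 0], d₂ ∈ ℝ, σ > 0 and positive integers n₁, n₂, and for θ ≥ 0 define ψ_θ(d₁,d₂) = (n₁θ/(2n₁+n₂)) · (1 − e^{c})/(1 + e^{c}) + n₁((n₁+n₂)d₁ − n₂d₂)/((n₁+n₂)(2n₁+n₂)), where c = (2θ/σ²) · n₁((n₁+n₂)d₁ − n₂d₂)/(2n₁+n₂). Then: (i) if d₁ ≤ n₂d₂/(n₁+n₂), the map θ ↦ ψ_θ(d₁,d₂) is nondecreasing on [0,∞) (strictly increasing when d₁ < n₂d₂/(n₁+n₂)), and inf_{θ≥0} ψ_θ(d₁,d₂) = n₁((n₁+n₂)d₁ − n₂d₂)/((n₁+n₂)(2n₁+n₂)), while sup_{θ≥0} ψ_θ(d₁,d₂) = +∞ whenever d₁ < n₂d₂/(n₁+n₂); (ii) if d₁ > n₂d₂/(n₁+n₂), the map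 θ ↦ ψ_θ(d₁,d₂) is strictly decreasing on [0,∞), with sup_{θ≥0} ψ_θ(d₁,d₂) = n₁((n₁+n₂)d₁ − n₂d₂)/((n₁+n₂)(2n₁+n₂)) and inf_{θ≥0} ψ_θ(d₁,d₂) = −∞. -/
/-!
Write `ψ_θ = β · θ · h(αθ) + C` with `h x = (1 - eˣ)/(1 + eˣ) = 2/(1 + eˣ) - 1`,
`β = n₁/(2n₁+n₂) > 0`, and `α` a positive multiple of `(n₁+n₂)d₁ - n₂d₂`. Since `h` is strictly
decreasing with `h 0 = 0`, for `α ≤ 0` the factor `h(αθ)` is nonnegative and nondecreasing in `θ ≥ 0`,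
so `θ · h(αθ)` increases from `0`, and for `α < 0` it grows at least like `θ · h α`, hence without
bound. The case `α > 0` is the mirror image because `h` is odd. The extremal value `C` is `ψ_0`.
-/

open Real Set Filter

noncomputable def expRatio (x : ℝ) : ℝ := (1 - exp x) / (1 + exp x)

lemma expRatio_eq_two_div_sub_one (x : ℝ) : expRatio x = 2 / (1 + exp x) - 1 := by
  have : 1 + exp x ≠ 0 := by positivity
  rw [expRatio]
  field_simp
  ring

lemma expRatio_strictAnti : StrictAnti expRatio := by
  intro a b hab
  simp only [expRatio_eq_two_div_sub_one]
  gcongr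

@[simp] lemma expRatio_zero : expRatio 0 = 0 := by simp [expRatio]

lemma expRatio_neg (x : ℝ) : expRatio (-x) = -expRatio x := by
  have : 1 + exp x ≠ 0 := by positivity
  rw [expRatio, expRatio, exp_neg]
  field_simp
  ring

lemma expRatio_nonneg_of_nonpos {x : ℝ} (hx : x ≤ 0) : 0 ≤ expRatio x :=
  expRatio_zero ▸ expRatio_strictAnti.antitone hx

lemma expRatio_pos_of_neg {x : ℝ} (hx : x < 0) : 0 < expRatio x :=
  expRatio_zero ▸ expRatio_strictAnti hx

section mul_expRatio

variable {α : ℝ}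

lemma monotoneOn_mul_expRatio (hα : α ≤ 0) :
    MonotoneOn (fun θ => θ * expRatio (α * θ)) (Ici 0) := by
  intro a ha b hb hab
  have hαa : α * a ≤ 0 := mul_nonpos_of_nonpos_of_nonneg hα ha
  exact mul_le_mul hab (expRatio_strictAnti.antitone (mul_le_mul_of_nonpos_left hab hα))
    (expRatio_nonneg_of_nonpos hαa) hb

lemma strictMonoOn_mul_expRatio (hα : α < 0) :
    StrictMonoOn (fun θ => θ * expRatio (α * θ)) (Ici 0) := by
  intro a ha b hb hab
  have hαb : α * b < 0 := mul_neg_of_neg_of_pos hα (lt_of_le_of_lt ha hab)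
  exact mul_lt_mul_of_nonneg_of_pos hab
    (expRatio_strictAnti.antitone (mul_le_mul_of_nonpos_left hab.le hα.le)) ha
    (expRatio_pos_of_neg hαb)

lemma tendsto_mul_expRatio_atTop (hα : α < 0) :
    Tendsto (fun θ => θ * expRatio (α * θ)) atTop atTop := by
  refine tendsto_atTop_mono' atTop ?_
    (tendsto_id.atTop_mul_const (expRatio_pos_of_neg (mul_neg_of_neg_of_pos hα one_pos)))
  filter_upwards [eventually_ge_atTop 1] with θ hθ
  exact mul_le_mul_of_nonneg_left
    (expRatio_strictAnti.antitone (mul_le_mul_of_nonpos_left hθ hα.le)) (zero_le_one.trans hθ)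

end mul_expRatio

noncomputable def expRatioCurve (β α C θ : ℝ) : ℝ := β * (θ * expRatio (α * θ)) + C

section expRatioCurve

variable {β α : ℝ} (C : ℝ)

@[simp] lemma expRatioCurve_zero : expRatioCurve β α C 0 = C := by simp [expRatioCurve]

lemma expRatioCurve_neg : expRatioCurve β α C = expRatioCurve (-β) (-α) C := by
  ext θ
  simp only [expRatioCurve, neg_mul, expRatio_neg, mul_neg, neg_neg]

lemma monotoneOn_expRatioCurve (hβ : 0 < β) (hα : α ≤ 0) :
    MonotoneOn (expRatioCurve β α C) (Ici 0) :=
  ((strictMono_mul_left_of_pos hβ).add_const C).monotone.comp_monotoneOn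
    (monotoneOn_mul_expRatio hα)

lemma strictMonoOn_expRatioCurve (hβ : 0 < β) (hα : α < 0) :
    StrictMonoOn (expRatioCurve β α C) (Ici 0) :=
  ((strictMono_mul_left_of_pos hβ).add_const C).comp_strictMonoOn
    (strictMonoOn_mul_expRatio hα)

lemma strictAntiOn_expRatioCurve (hβ : 0 < β) (hα : 0 < α) :
    StrictAntiOn (expRatioCurve β α C) (Ici 0) := by
  rw [expRatioCurve_neg]
  exact ((strictAnti_mul_left (neg_neg_of_pos hβ)).add_const C).comp_strictMonoOn
    (strictMonoOn_mul_expRatio (neg_neg_of_pos hα))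

lemma tendsto_expRatioCurve_atTop (hβ : 0 < β) (hα : α < 0) :
    Tendsto (expRatioCurve β α C) atTop atTop :=
  tendsto_atTop_add_const_right _ C ((tendsto_mul_expRatio_atTop hα).const_mul_atTop hβ)

lemma tendsto_expRatioCurve_atBot (hβ : 0 < β) (hα : 0 < α) :
    Tendsto (expRatioCurve β α C) atTop atBot := by
  rw [expRatioCurve_neg]
  exact tendsto_atBot_add_const_right _ C
    ((tendsto_mul_expRatio_atTop (neg_neg_of_pos hα)).const_mul_atTop_of_neg (neg_neg_of_pos hβ))

end expRatioCurve

theorem stmt_10_general (n₁ n₂ : ℕ) (hn₁ : 0 < n₁) (σ : ℝ) (hσ : 0 < σ)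
    (d₁ : ℝ) (d₂ : ℝ)
    (ψ : ℝ → ℝ)
    (hψ : ψ = fun θ =>
      ((n₁ : ℝ) * θ / (2 * (n₁ : ℝ) + n₂)) *
          ((1 - Real.exp ((2 * θ / σ ^ 2) *
              ((n₁ : ℝ) * (((n₁ : ℝ) + n₂) * d₁ - n₂ * d₂) / (2 * (n₁ : ℝ) + n₂)))) /
            (1 + Real.exp ((2 * θ / σ ^ 2) *
              ((n₁ : ℝ) * (((n₁ : ℝ) + n₂) * d₁ - n₂ * d₂) / (2 * (n₁ : ℝ) + n₂))))) +
        (n₁ : ℝ) * (((n₁ : ℝ) + n₂) * d₁ - n₂ * d₂) /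
          (((n₁ : ℝ) + n₂) * (2 * (n₁ : ℝ) + n₂))) :
    (d₁ ≤ (n₂ : ℝ) * d₂ / ((n₁ : ℝ) + n₂) →
      MonotoneOn ψ (Ici 0) ∧
        (d₁ < (n₂ : ℝ) * d₂ / ((n₁ : ℝ) + n₂) → StrictMonoOn ψ (Ici 0)) ∧
        IsGLB (ψ '' Ici 0)
          ((n₁ : ℝ) * (((n₁ : ℝ) + n₂) * d₁ - n₂ * d₂) /
            (((n₁ : ℝ) + n₂) * (2 * (n₁ : ℝ) + n₂))) ∧
        (d₁ < (n₂ : ℝ) * d₂ / ((n₁ : ℝ) + n₂) → ∀ M : ℝ, ∃ θ ≥ (0 : ℝ), M < ψ θ)) ∧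
    ((n₂ : ℝ) * d₂ / ((n₁ : ℝ) + n₂) < d₁ →
      StrictAntiOn ψ (Ici 0) ∧
        IsLUB (ψ '' Ici 0)
          ((n₁ : ℝ) * (((n₁ : ℝ) + n₂) * d₁ - n₂ * d₂) /
            (((n₁ : ℝ) + n₂) * (2 * (n₁ : ℝ) + n₂))) ∧
        ∀ M : ℝ, ∃ θ ≥ (0 : ℝ), ψ θ < M) := by
  have hn : (0 : ℝ) < n₁ := by exact_mod_cast hn₁
  have hN : (0 : ℝ) < n₁ + n₂ := by positivity
  have hβ : (0 : ℝ) < n₁ / (2 * n₁ + n₂) := by positivity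
  set D := ((n₁ : ℝ) + n₂) * d₁ - n₂ * d₂ with hD
  set κ : ℝ := 2 * n₁ / (2 * n₁ + n₂) / σ ^ 2
  have hκ : 0 < κ := by positivity
  set C : ℝ := n₁ * D / ((n₁ + n₂) * (2 * n₁ + n₂))
  have hψ_eq : ψ = expRatioCurve (n₁ / (2 * n₁ + n₂)) (κ * D) C := by
    rw [hψ]
    ext θ
    rw [show 2 * θ / σ ^ 2 * (n₁ * D / (2 * n₁ + n₂)) = κ * D * θ by simp only [κ]; ring]
    simp only [expRatioCurve, expRatio]
    ring
  rw [hψ_eq]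
  refine ⟨fun hle => ?_, fun hgt => ?_⟩
  · have hα : κ * D ≤ 0 :=
      mul_nonpos_of_nonneg_of_nonpos hκ.le (by rw [le_div_iff₀ hN] at hle; linarith)
    have hα_neg (hlt : d₁ < n₂ * d₂ / (n₁ + n₂)) : κ * D < 0 :=
      mul_neg_of_pos_of_neg hκ (by rw [lt_div_iff₀ hN] at hlt; linarith)
    have hmono := monotoneOn_expRatioCurve C hβ hα
    refine ⟨hmono, fun hlt => strictMonoOn_expRatioCurve C hβ (hα_neg hlt), ?_, fun hlt M => ?_⟩
    · simpa using (hmono.map_isLeast isLeast_Ici).isGLB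
    · exact ((eventually_ge_atTop 0).and
        ((tendsto_expRatioCurve_atTop C hβ (hα_neg hlt)).eventually_gt_atTop M)).exists
  · have hα : 0 < κ * D := mul_pos hκ (by rw [div_lt_iff₀ hN] at hgt; linarith)
    have hanti := strictAntiOn_expRatioCurve C hβ hα
    refine ⟨hanti, ?_, fun M => ?_⟩
    · simpa using (hanti.antitoneOn.map_isLeast isLeast_Ici).isLUB
    · exact ((eventually_ge_atTop 0).and
        ((tendsto_expRatioCurve_atBot C hβ hα).eventually_lt_atBot M)).exists

/-- Monotonicity and extremal values of
`ψ_θ(d₁,d₂) = (n₁θ/(2n₁+n₂))(1−e^c)/(1+e^c) + n₁((n₁+n₂)d₁−n₂d₂)/((n₁+n₂)(2n₁+n₂))`,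
`c = (2θ/σ²) n₁((n₁+n₂)d₁−n₂d₂)/(2n₁+n₂)`, as a function of `θ ∈ [0,∞)`:
(i) if `d₁ ≤ n₂d₂/(n₁+n₂)` it is nondecreasing (strictly increasing under strict
inequality), its infimum over `θ ≥ 0` is `n₁((n₁+n₂)d₁−n₂d₂)/((n₁+n₂)(2n₁+n₂))`, and its
supremum is `+∞` when the inequality is strict;
(ii) if `d₁ > n₂d₂/(n₁+n₂)` it is strictly decreasing, its supremum over `θ ≥ 0` is
`n₁((n₁+n₂)d₁−n₂d₂)/((n₁+n₂)(2n₁+n₂))`, and its infimum is `−∞`. -/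
theorem stmt_10 (n₁ n₂ : ℕ) (hn₁ : 0 < n₁) (hn₂ : 0 < n₂) (σ : ℝ) (hσ : 0 < σ)
    (d₁ : ℝ) (hd₁ : d₁ ≤ 0) (d₂ : ℝ)
    (ψ : ℝ → ℝ)
    (hψ : ψ = fun θ =>
      ((n₁ : ℝ) * θ / (2 * (n₁ : ℝ) + n₂)) *
          ((1 - Real.exp ((2 * θ / σ ^ 2) *
              ((n₁ : ℝ) * (((n₁ : ℝ) + n₂) * d₁ - n₂ * d₂) / (2 * (n₁ : ℝ) + n₂)))) /
            (1 + Real.exp ((2 * θ / σ ^ 2) *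
              ((n₁ : ℝ) * (((n₁ : ℝ) + n₂) * d₁ - n₂ * d₂) / (2 * (n₁ : ℝ) + n₂))))) +
        (n₁ : ℝ) * (((n₁ : ℝ) + n₂) * d₁ - n₂ * d₂) /
          (((n₁ : ℝ) + n₂) * (2 * (n₁ : ℝ) + n₂))) :
    (d₁ ≤ (n₂ : ℝ) * d₂ / ((n₁ : ℝ) + n₂) →
      MonotoneOn ψ (Ici 0) ∧
        (d₁ < (n₂ : ℝ) * d₂ / ((n₁ : ℝ) + n₂) → StrictMonoOn ψ (Ici 0)) ∧
        IsGLB (ψ '' Ici 0)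
          ((n₁ : ℝ) * (((n₁ : ℝ) + n₂) * d₁ - n₂ * d₂) /
            (((n₁ : ℝ) + n₂) * (2 * (n₁ : ℝ) + n₂))) ∧
        (d₁ < (n₂ : ℝ) * d₂ / ((n₁ : ℝ) + n₂) → ∀ M : ℝ, ∃ θ ≥ (0 : ℝ), M < ψ θ)) ∧
    ((n₂ : ℝ) * d₂ / ((n₁ : ℝ) + n₂) < d₁ →
      StrictAntiOn ψ (Ici 0) ∧
        IsLUB (ψ '' Ici 0)
          ((n₁ : ℝ) * (((n₁ : ℝ) + n₂) * d₁ - n₂ * d₂) /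
            (((n₁ : ℝ) + n₂) * (2 * (n₁ : ℝ) + n₂))) ∧
        ∀ M : ℝ, ∃ θ ≥ (0 : ℝ), ψ θ < M) :=
  stmt_10_general n₁ n₂ hn₁ σ hσ d₁ d₂ ψ hψ
end

section
/- Let T₁ = (n₁X̄_S + n₂Ȳ)/(n₁+n₂), T₂ = X̄_{3−S}, S the index of the selected treatment, and let δ be any Borel-measurable estimator with E[δ²] < ∞ for all (μ₁,μ₂). Define δ* = E[δ | (T₁, T₂, S)]. Then R((μ₁,μ₂), δ*) ≤ R((μ₁,μ₂), δ) for every (μ₁,μ₂) ∈ ℝ², with strict inequality at every (μ₁,μ₂) for which δ ≠ δ* with positive probability. In particular, any location and permutation equivariant estimator of μ_S that is not almost surely a function of (T₁, T₂, S) is dominated under squared error loss by its conditional expectation given (T₁, T₂, S). -/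
/-!
The estimator `δ* = E[δ | T]` is the orthogonal projection of `δ` onto the `L²` functions of
`T = (T₁, T₂, S)`, and the selected mean `μ_S` is such a function since it depends on the data
only through `S`. Pythagoras then splits the risk of `δ` as
`E[(δ - μ_S)²] = E[(δ - δ*)²] + E[(δ* - μ_S)²]`, and the first summand vanishes exactly when
`δ = δ*` almost surely.
-/

open MeasureTheory ProbabilityTheory Real

namespace MeasureTheory

variable {Ω : Type*} {m m₀ : MeasurableSpace Ω} {μ : Measure Ω} [IsFiniteMeasure μ]
  {f g : Ω → ℝ}

theorem integral_mul_sub_condExp_eq_zero (hm : m ≤ m₀) (hf : MemLp f 2 μ) (hg : MemLp g 2 μ)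
    (hgm : StronglyMeasurable[m] g) :
    ∫ ω, g ω * (f ω - μ[f|m] ω) ∂μ = 0 := by
  have hfc : MemLp (μ[f|m]) 2 μ := hf.condExp one_le_two
  have hpull : μ[g * f|m] =ᵐ[μ] g * μ[f|m] :=
    condExp_mul_of_stronglyMeasurable_left hgm (hg.integrable_mul hf) (hf.integrable one_le_two)
  calc ∫ ω, g ω * (f ω - μ[f|m] ω) ∂μ
      = ∫ ω, (g * f) ω ∂μ - ∫ ω, (g * μ[f|m]) ω ∂μ := by
        simp only [mul_sub]
        exact integral_sub (hg.integrable_mul hf) (hg.integrable_mul hfc)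
    _ = 0 := by rw [← integral_condExp hm, integral_congr_ae hpull, sub_self]

theorem integral_sub_sq_eq_add_integral_condExp_sub_sq (hm : m ≤ m₀) (hf : MemLp f 2 μ)
    (hg : MemLp g 2 μ) (hgm : StronglyMeasurable[m] g) :
    ∫ ω, (f ω - g ω) ^ 2 ∂μ
      = ∫ ω, (f ω - μ[f|m] ω) ^ 2 ∂μ + ∫ ω, (μ[f|m] ω - g ω) ^ 2 ∂μ := by
  have hfc : MemLp (μ[f|m]) 2 μ := hf.condExp one_le_two
  have hres : Integrable (fun ω ↦ (f ω - μ[f|m] ω) ^ 2) μ := (hf.sub hfc).integrable_sq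
  have hdiff : Integrable (fun ω ↦ (μ[f|m] ω - g ω) ^ 2) μ := (hfc.sub hg).integrable_sq
  have hcross_int : Integrable (fun ω ↦ 2 * ((μ[f|m] ω - g ω) * (f ω - μ[f|m] ω))) μ :=
    ((hfc.sub hg).integrable_mul (hf.sub hfc)).const_mul 2
  have hcross : ∫ ω, 2 * ((μ[f|m] ω - g ω) * (f ω - μ[f|m] ω)) ∂μ = 0 := by
    have := integral_mul_sub_condExp_eq_zero hm hf (hfc.sub hg)
      (stronglyMeasurable_condExp.sub hgm)
    simp only [Pi.sub_apply] at this
    rw [integral_const_mul, this, mul_zero]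
  calc ∫ ω, (f ω - g ω) ^ 2 ∂μ
      = ∫ ω, ((f ω - μ[f|m] ω) ^ 2 + (2 * ((μ[f|m] ω - g ω) * (f ω - μ[f|m] ω))
          + (μ[f|m] ω - g ω) ^ 2)) ∂μ := by
        congr 1 with ω
        ring
    _ = ∫ ω, (f ω - μ[f|m] ω) ^ 2 ∂μ + ∫ ω, (μ[f|m] ω - g ω) ^ 2 ∂μ := by
        rw [integral_add hres (by exact hcross_int.add hdiff), integral_add hcross_int hdiff,
          hcross, zero_add]

theorem integral_condExp_sub_sq_le (hm : m ≤ m₀) (hf : MemLp f 2 μ) (hg : MemLp g 2 μ)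
    (hgm : StronglyMeasurable[m] g) :
    ∫ ω, (μ[f|m] ω - g ω) ^ 2 ∂μ ≤ ∫ ω, (f ω - g ω) ^ 2 ∂μ := by
  rw [integral_sub_sq_eq_add_integral_condExp_sub_sq hm hf hg hgm]
  exact le_add_of_nonneg_left (integral_nonneg fun ω ↦ sq_nonneg _)

theorem integral_condExp_sub_sq_lt (hm : m ≤ m₀) (hf : MemLp f 2 μ) (hg : MemLp g 2 μ)
    (hgm : StronglyMeasurable[m] g) (hne : ¬f =ᵐ[μ] μ[f|m]) :
    ∫ ω, (μ[f|m] ω - g ω) ^ 2 ∂μ < ∫ ω, (f ω - g ω) ^ 2 ∂μ := by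
  rw [integral_sub_sq_eq_add_integral_condExp_sub_sq hm hf hg hgm]
  refine lt_add_of_pos_left _ ((integral_nonneg fun ω ↦ sq_nonneg _).lt_of_ne fun h ↦ hne ?_)
  have hres : MemLp (f - μ[f|m]) 2 μ := hf.sub (hf.condExp one_le_two)
  filter_upwards [(integral_eq_zero_iff_of_nonneg (fun ω ↦ sq_nonneg _)
    hres.integrable_sq).mp h.symm] with ω hω
  simpa [sub_eq_zero] using hω

end MeasureTheory

/-- Rao–Blackwellization in the two-stage drop-the-losers design: for any
square-integrable estimator `δ` of the selected treatment mean, the conditional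
expectation `δ* = E[δ | (T₁,T₂,S)]` has risk no larger than that of `δ` at every
parameter `(μ₁,μ₂)`, with strict inequality whenever `δ ≠ δ*` with positive
probability. -/
theorem stmt_15 {Ω : Type} [MeasurableSpace Ω]
    (n₁ n₂ : ℕ) (hn₁ : 0 < n₁) (hn₂ : 0 < n₂) (σ : ℝ) (hσ : 0 < σ)
    (P : ℝ → ℝ → Measure Ω) (hP : ∀ μ₁ μ₂, IsProbabilityMeasure (P μ₁ μ₂))
    (X₁ X₂ Y₁ Y₂ : Ω → ℝ)
    (hmX₁ : Measurable X₁) (hmX₂ : Measurable X₂)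
    (hmY₁ : Measurable Y₁) (hmY₂ : Measurable Y₂)
    (hIndep : ∀ μ₁ μ₂ : ℝ, iIndepFun ![X₁, X₂, Y₁, Y₂] (P μ₁ μ₂))
    (hX₁ : ∀ μ₁ μ₂ : ℝ,
      Measure.map X₁ (P μ₁ μ₂) = gaussianReal μ₁ (Real.toNNReal (σ ^ 2 / n₁)))
    (hX₂ : ∀ μ₁ μ₂ : ℝ,
      Measure.map X₂ (P μ₁ μ₂) = gaussianReal μ₂ (Real.toNNReal (σ ^ 2 / n₁)))
    (hY₁ : ∀ μ₁ μ₂ : ℝ,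
      Measure.map Y₁ (P μ₁ μ₂) = gaussianReal μ₁ (Real.toNNReal (σ ^ 2 / n₂)))
    (hY₂ : ∀ μ₁ μ₂ : ℝ,
      Measure.map Y₂ (P μ₁ μ₂) = gaussianReal μ₂ (Real.toNNReal (σ ^ 2 / n₂)))
    (Ybar XS T₁ T₂ : Ω → ℝ) (S : Ω → ℕ) (μS : ℝ → ℝ → Ω → ℝ)
    (hYbar : Ybar = fun ω => if X₁ ω ≥ X₂ ω then Y₁ ω else Y₂ ω)
    (hXS : XS = fun ω => max (X₁ ω) (X₂ ω))
    (hT₁ : T₁ = fun ω => ((n₁ : ℝ) * XS ω + n₂ * Ybar ω) / ((n₁ : ℝ) + n₂))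
    (hT₂ : T₂ = fun ω => min (X₁ ω) (X₂ ω))
    (hS : S = fun ω => if X₁ ω ≥ X₂ ω then 1 else 2)
    (hμS : μS = fun μ₁ μ₂ ω => if X₁ ω ≥ X₂ ω then μ₁ else μ₂)
    (mT : MeasurableSpace Ω)
    (hmT : mT = MeasurableSpace.comap (fun ω => (T₁ ω, T₂ ω, S ω)) inferInstance)
    (δ : ℝ × ℝ × ℝ → ℝ) (hδ : Measurable δ)
    (δdata : Ω → ℝ) (hδdata : δdata = fun ω => δ (X₁ ω, X₂ ω, Ybar ω))
    (hInt : ∀ μ₁ μ₂ : ℝ, Integrable (fun ω => (δdata ω) ^ 2) (P μ₁ μ₂)) :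
    ∀ μ₁ μ₂ : ℝ,
      (∫ ω, (MeasureTheory.condExp mT (P μ₁ μ₂) δdata ω - μS μ₁ μ₂ ω) ^ 2 ∂(P μ₁ μ₂)) ≤
        (∫ ω, (δdata ω - μS μ₁ μ₂ ω) ^ 2 ∂(P μ₁ μ₂)) ∧
      (¬ δdata =ᵐ[P μ₁ μ₂] MeasureTheory.condExp mT (P μ₁ μ₂) δdata →
        (∫ ω, (MeasureTheory.condExp mT (P μ₁ μ₂) δdata ω - μS μ₁ μ₂ ω) ^ 2 ∂(P μ₁ μ₂)) <
          ∫ ω, (δdata ω - μS μ₁ μ₂ ω) ^ 2 ∂(P μ₁ μ₂)) := by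
  intro μ₁ μ₂
  have := hP μ₁ μ₂
  subst hmT
  set T : Ω → ℝ × ℝ × ℕ := fun ω ↦ (T₁ ω, T₂ ω, S ω)
  have hsel : MeasurableSet {ω | X₁ ω ≥ X₂ ω} := measurableSet_le hmX₂ hmX₁
  have hmYbar : Measurable Ybar := hYbar ▸ Measurable.ite hsel hmY₁ hmY₂
  have hm : MeasurableSpace.comap T inferInstance ≤ ‹MeasurableSpace Ω› := by
    refine Measurable.comap_le ?_
    have hmS : Measurable S := hS ▸ Measurable.ite hsel measurable_const measurable_const
    subst hT₁ hT₂ hXS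
    fun_prop
  have hSm : Measurable[MeasurableSpace.comap T inferInstance] S :=
    (comap_measurable T).snd.snd
  have hμS_eq : μS μ₁ μ₂ = (fun k ↦ if k = 1 then μ₁ else μ₂) ∘ S := by
    ext ω
    by_cases h : X₁ ω ≥ X₂ ω <;> simp [hμS, hS, h]
  have hμSm : StronglyMeasurable[MeasurableSpace.comap T inferInstance] (μS μ₁ μ₂) :=
    hμS_eq ▸ (measurable_from_nat.comp hSm).stronglyMeasurable
  have hμS2 : MemLp (μS μ₁ μ₂) 2 (P μ₁ μ₂) := by
    refine MemLp.of_bound (hμSm.mono hm).aestronglyMeasurable (max |μ₁| |μ₂|)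
      (.of_forall fun ω ↦ ?_)
    by_cases h : X₁ ω ≥ X₂ ω <;> simp [hμS, h]
  have hδ2 : MemLp δdata 2 (P μ₁ μ₂) := by
    have : Measurable δdata := hδdata ▸ hδ.comp (hmX₁.prodMk (hmX₂.prodMk hmYbar))
    exact (memLp_two_iff_integrable_sq this.aestronglyMeasurable).mpr (hInt μ₁ μ₂)
  exact ⟨integral_condExp_sub_sq_le hm hδ2 hμS2 hμSm,
    integral_condExp_sub_sq_lt hm hδ2 hμS2 hμSm⟩
end
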